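/- arXiv:2501.12355 — 5 statements merged into one kernel-verified Lean document; each statement's English description precedes it below -/
import Mathlib

section
/- Let d ≥ 2 and m ≥ 2. Let p_1, …, p_m ∈ ℝ^d be leader positions and let x, x̄ ∈ ℝ^d be two follower positions with x ≠ p_i and x̄ ≠ p_i for all i. Set g_i = (p_i − x)/‖p_i − x‖ and ḡ_i = (p_i − x̄)/‖p_i − x̄‖. Assume that the bearings g_1, …, g_m are pairwise non-parallel (equivalently, no three points p_i, p_j, x with i ≠ j are collinear). If Σ_{i=1}^{m} P_{g_i} ḡ_i = 0, then ḡ_i = g_i for every i, and consequently x̄ = x. (Equivalently, the only realizable unit bearing tuple in the kernel set Y_eq is the measured bearing tuple itself.) -/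
open RealInnerProductSpace

/-- `bproj g v` is the orthogonal projection of `v` onto the orthogonal
complement of `g`, i.e. `P_g v = v - (⟪g,v⟫/‖g‖²) • g`. -/
noncomputable def bproj {d : ℕ} (g v : EuclideanSpace ℝ (Fin d)) :
    EuclideanSpace ℝ (Fin d) :=
  v - ((⟪g, v⟫ : ℝ) / ‖g‖ ^ 2) • g

/-- 1-to-many system: if the measured bearings `g_i` from follower `x` to the
stationary leaders `p_i` are pairwise non-parallel, and the bearing tuple `ḡ`
measured from another follower position `x̄` satisfies `Σ_i P_{g_i} ḡ_i = 0`,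
then `ḡ_i = g_i` for all `i` and `x̄ = x`. -/
theorem stmt4 (d m : ℕ) (hd : 2 ≤ d) (hm : 2 ≤ m)
    (p : Fin m → EuclideanSpace ℝ (Fin d))
    (x xbar : EuclideanSpace ℝ (Fin d))
    (hx : ∀ i, x ≠ p i) (hxbar : ∀ i, xbar ≠ p i)
    (g gbar : Fin m → EuclideanSpace ℝ (Fin d))
    (hg : ∀ i, g i = (‖p i - x‖)⁻¹ • (p i - x))
    (hgbar : ∀ i, gbar i = (‖p i - xbar‖)⁻¹ • (p i - xbar))
    (hnp : ∀ i j : Fin m, i ≠ j → ∀ c : ℝ, g j ≠ c • g i)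
    (heq : ∑ i, bproj (g i) (gbar i) = 0) :
    (∀ i, gbar i = g i) ∧ xbar = x := by
  have hpx : ∀ i, p i - x ≠ 0 := fun i => sub_ne_zero.mpr (Ne.symm (hx i))
  have hpxb : ∀ i, p i - xbar ≠ 0 := fun i => sub_ne_zero.mpr (Ne.symm (hxbar i))
  have hnx : ∀ i, ‖p i - x‖ ≠ 0 := fun i => norm_ne_zero_iff.mpr (hpx i)
  have hnxb : ∀ i, ‖p i - xbar‖ ≠ 0 := fun i => norm_ne_zero_iff.mpr (hpxb i)
  have hng : ∀ i, ‖g i‖ = 1 := by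
    intro i
    rw [hg i, norm_smul, norm_inv, norm_norm]
    exact inv_mul_cancel₀ (hnx i)
  -- simplified bproj
  have hb : ∀ i v, bproj (g i) v = v - (⟪g i, v⟫ : ℝ) • g i := by
    intro i v
    simp [bproj, hng i]
  have hgperp : ∀ i v, (⟪g i, bproj (g i) v⟫ : ℝ) = 0 := by
    intro i v
    rw [hb, inner_sub_right, real_inner_smul_right, real_inner_self_eq_norm_sq, hng i]
    ring
  have hpxg : ∀ i, p i - x = ‖p i - x‖ • g i := by
    intro i
    rw [hg i, smul_smul, mul_inv_cancel₀ (hnx i), one_smul]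
  have hpxbg : ∀ i, p i - xbar = ‖p i - xbar‖ • gbar i := by
    intro i
    rw [hgbar i, smul_smul, mul_inv_cancel₀ (hnxb i), one_smul]
  have hvb : ∀ i, (⟪gbar i, bproj (g i) (gbar i)⟫ : ℝ)
      = ‖bproj (g i) (gbar i)‖ ^ 2 := by
    intro i
    have h1 : ‖bproj (g i) (gbar i)‖ ^ 2 = ⟪bproj (g i) (gbar i), bproj (g i) (gbar i)⟫ :=
      (real_inner_self_eq_norm_sq _).symm
    rw [h1]
    conv_rhs => rw [hb i (gbar i)]
    rw [inner_sub_left, real_inner_smul_left]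
    have h2 : (⟪g i, bproj (g i) (gbar i)⟫ : ℝ) = 0 := hgperp i (gbar i)
    rw [hb] at h2 ⊢
    rw [h2]
    ring
  have hkey : ∀ i, (⟪xbar - x, bproj (g i) (gbar i)⟫ : ℝ)
      = -(‖p i - xbar‖ * ‖bproj (g i) (gbar i)‖ ^ 2) := by
    intro i
    have hsplit : xbar - x = (p i - x) - (p i - xbar) := by abel
    have e1 : (⟪p i - x, bproj (g i) (gbar i)⟫ : ℝ) = 0 := by
      rw [hpxg i, real_inner_smul_left, hgperp i (gbar i)]; ring
    have e2 : (⟪p i - xbar, bproj (g i) (gbar i)⟫ : ℝ)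
        = ‖p i - xbar‖ * ‖bproj (g i) (gbar i)‖ ^ 2 := by
      conv_lhs => rw [hpxbg i]
      rw [real_inner_smul_left, hvb i]
    rw [hsplit, inner_sub_left, e1, e2]
    ring
  have hsum : ∑ i, (‖p i - xbar‖ * ‖bproj (g i) (gbar i)‖ ^ 2) = 0 := by
    have h0 : (⟪xbar - x, ∑ i, bproj (g i) (gbar i)⟫ : ℝ) = 0 := by
      rw [heq, inner_zero_right]
    rw [inner_sum] at h0
    have h1 : ∑ i, (-(‖p i - xbar‖ * ‖bproj (g i) (gbar i)‖ ^ 2)) = 0 := by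
      rw [← h0]
      exact Finset.sum_congr rfl fun i _ => (hkey i).symm
    rw [Finset.sum_neg_distrib] at h1
    linarith
  have hbz : ∀ i, bproj (g i) (gbar i) = 0 := by
    intro i
    have hnonneg : ∀ j ∈ Finset.univ, 0 ≤ ‖p j - xbar‖ * ‖bproj (g j) (gbar j)‖ ^ 2 :=
      fun j _ => mul_nonneg (norm_nonneg _) (sq_nonneg _)
    have := (Finset.sum_eq_zero_iff_of_nonneg hnonneg).mp hsum i (Finset.mem_univ i)
    rcases mul_eq_zero.mp this with h | h
    · exact absurd h (hnxb i)
    · have : ‖bproj (g i) (gbar i)‖ = 0 := by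
        have := sq_eq_zero_iff.mp h
        exact this
      exact norm_eq_zero.mp this
  have hc : ∀ i, gbar i = (⟪g i, gbar i⟫ : ℝ) • g i := by
    intro i
    have := hbz i
    rw [hb] at this
    exact sub_eq_zero.mp this
  have hline : ∀ i, xbar - x = (‖p i - x‖ - ‖p i - xbar‖ * (⟪g i, gbar i⟫ : ℝ)) • g i := by
    intro i
    have hsplit : xbar - x = (p i - x) - (p i - xbar) := by abel
    have e : xbar - x = ‖p i - x‖ • g i - ‖p i - xbar‖ • ((⟪g i, gbar i⟫ : ℝ) • g i) := by
      rw [← hc i, ← hpxg i, ← hpxbg i]; abel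
    rw [e, smul_smul, ← sub_smul]
  have hxx : xbar = x := by
    by_contra hne
    have hdiff : xbar - x ≠ 0 := sub_ne_zero.mpr hne
    have h01 : (0 : ℕ) < m := by omega
    have h1m : (1 : ℕ) < m := by omega
    set i : Fin m := ⟨0, h01⟩ with hi
    set j : Fin m := ⟨1, h1m⟩ with hj
    have hij : i ≠ j := by simp [hi, hj, Fin.ext_iff]
    obtain ⟨ti, hti⟩ : ∃ t : ℝ, xbar - x = t • g i := ⟨_, hline i⟩
    obtain ⟨tj, htj'⟩ : ∃ t : ℝ, xbar - x = t • g j := ⟨_, hline j⟩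
    have htj : tj ≠ 0 := by
      intro h0
      apply hdiff
      rw [htj', h0, zero_smul]
    have : g j = (tj⁻¹ * ti) • g i := by
      have h1 : tj • g j = ti • g i := by rw [← htj', ← hti]
      have := congrArg (fun v => tj⁻¹ • v) h1
      simpa [smul_smul, inv_mul_cancel₀ htj] using this
    exact hnp i j hij _ this
  refine ⟨fun i => ?_, hxx⟩
  rw [hgbar i, hxx, ← hg i]
end

section
/- Let d ≥ 2 and m ≥ 2. Suppose the target bearing formation is realizable: there exist points p_1, …, p_m, p* ∈ ℝ^d with p* ≠ p_j and g*_j = (p_j − p*)/‖p_j − p*‖ for all j, and suppose the target bearings g*_1, …, g*_m are pairwise non-parallel (no three points p_i, p_j, p* are collinear). Then the matrix Σ_{j=1}^{m} P_{g*_j} is invertible, and p* = (Σ_{j=1}^{m} P_{g*_j})^{-1} (Σ_{j=1}^{m} P_{g*_j} p_j); in particular p* is an equilibrium of the follower dynamics ṗ_n = −Σ_j P_{g_{nj}} g*_j. -/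
open RealInnerProductSpace

lemma bproj_smul_self {d : ℕ} (g : EuclideanSpace ℝ (Fin d)) (hg : g ≠ 0) (c : ℝ) :
    bproj g (c • g) = 0 := by
  have hng : ‖g‖ ^ 2 ≠ 0 := pow_ne_zero 2 (norm_ne_zero_iff.mpr hg)
  simp only [bproj, real_inner_smul_right, real_inner_self_eq_norm_sq]
  rw [mul_div_assoc, div_self hng, mul_one, sub_self]

lemma bproj_add {d : ℕ} (g v w : EuclideanSpace ℝ (Fin d)) :
    bproj g (v + w) = bproj g v + bproj g w := by
  simp only [bproj, inner_add_right, add_div, add_smul]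
  abel

lemma bproj_sub {d : ℕ} (g v w : EuclideanSpace ℝ (Fin d)) :
    bproj g (v - w) = bproj g v - bproj g w := by
  simp only [bproj, inner_sub_right, sub_div, sub_smul]
  abel

lemma bproj_smul {d : ℕ} (g v : EuclideanSpace ℝ (Fin d)) (c : ℝ) :
    bproj g (c • v) = c • bproj g v := by
  simp only [bproj, real_inner_smul_right, mul_div_assoc, mul_smul, smul_sub]

/-- If the target bearing formation of the 1-to-many system is realized by
leaders `p_1, …, p_m` and follower position `p*`, with pairwise non-parallel
target bearings `g*_j = (p_j − p*)/‖p_j − p*‖`, then `Σ_j P_{g*_j}` is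
invertible, `p* = (Σ_j P_{g*_j})⁻¹ (Σ_j P_{g*_j} p_j)`, and `p*` is an
equilibrium of the follower dynamics `ṗ = −Σ_j P_{g_j(p)} g*_j`. -/
theorem stmt5 (d m : ℕ) (hd : 2 ≤ d) (hm : 2 ≤ m)
    (p : Fin m → EuclideanSpace ℝ (Fin d)) (pstar : EuclideanSpace ℝ (Fin d))
    (hne : ∀ j, pstar ≠ p j)
    (gstar : Fin m → EuclideanSpace ℝ (Fin d))
    (hgs : ∀ j, gstar j = (‖p j - pstar‖)⁻¹ • (p j - pstar))
    (hnp : ∀ i j : Fin m, i ≠ j → ∀ c : ℝ, gstar j ≠ c • gstar i) :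
    Function.Bijective
      (fun v : EuclideanSpace ℝ (Fin d) => ∑ j, bproj (gstar j) v) ∧
    (∑ j, bproj (gstar j) pstar) = ∑ j, bproj (gstar j) (p j) ∧
    -(∑ j, bproj ((‖p j - pstar‖)⁻¹ • (p j - pstar)) (gstar j)) = 0 := by
  have hdiff : ∀ j, p j - pstar ≠ 0 := fun j => sub_ne_zero.mpr (fun h => hne j h.symm)
  have hnn : ∀ j, ‖p j - pstar‖ ≠ 0 := fun j => norm_ne_zero_iff.mpr (hdiff j)
  have hnorm : ∀ j, ‖gstar j‖ = 1 := by
    intro j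
    rw [hgs j, norm_smul, norm_inv, norm_norm, inv_mul_cancel₀ (hnn j)]
  have hg0 : ∀ j, gstar j ≠ 0 := by
    intro j h
    have := hnorm j; rw [h, norm_zero] at this; norm_num at this
  -- the linear map
  set L : EuclideanSpace ℝ (Fin d) →ₗ[ℝ] EuclideanSpace ℝ (Fin d) :=
    { toFun := fun v => ∑ j, bproj (gstar j) v
      map_add' := fun v w => by simp [bproj_add, Finset.sum_add_distrib]
      map_smul' := fun c v => by simp [bproj_smul, Finset.smul_sum] } with hL
  have hinj : Function.Injective L := by
    rw [← LinearMap.ker_eq_bot, LinearMap.ker_eq_bot']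
    intro u hu
    by_contra hu0
    -- each term nonneg, sum of inner products is zero
    have hterm : ∀ j, ⟪u, bproj (gstar j) u⟫ = ‖u‖ ^ 2 - ⟪gstar j, u⟫ ^ 2 := by
      intro j
      simp only [bproj, inner_sub_right, real_inner_smul_right, hnorm,
        real_inner_self_eq_norm_sq, real_inner_comm u (gstar j)]
      ring
    have hsum : ∑ j, ⟪u, bproj (gstar j) u⟫ = 0 := by
      rw [← inner_sum]
      have : ∑ j, bproj (gstar j) u = 0 := hu
      rw [this, inner_zero_right]
    have hnonneg : ∀ j ∈ Finset.univ, (0:ℝ) ≤ ⟪u, bproj (gstar j) u⟫ := by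
      intro j _
      rw [hterm j]
      have h1 : |⟪gstar j, u⟫| ≤ ‖gstar j‖ * ‖u‖ := abs_real_inner_le_norm _ _
      rw [hnorm j, one_mul] at h1
      have h2 : (⟪gstar j, u⟫ : ℝ) ^ 2 ≤ ‖u‖ ^ 2 := by
        rw [← sq_abs]
        exact pow_le_pow_left₀ (abs_nonneg _) h1 2
      linarith
    have hzero : ∀ j, ⟪u, bproj (gstar j) u⟫ = 0 := by
      intro j
      have := (Finset.sum_eq_zero_iff_of_nonneg hnonneg).mp hsum j (Finset.mem_univ j)
      exact this
    -- each j: u is parallel to gstar j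
    have hpar : ∀ j, ∃ c : ℝ, c ≠ 0 ∧ u = c • gstar j := by
      intro j
      have h1 : ⟪gstar j, u⟫ ^ 2 = ‖u‖ ^ 2 := by
        have := hzero j; rw [hterm j] at this; linarith
      have h2 : ⟪gstar j, u⟫ = ‖u‖ ∨ ⟪gstar j, u⟫ = -‖u‖ := sq_eq_sq_iff_eq_or_eq_neg.mp h1
      have hun : ‖u‖ ≠ 0 := norm_ne_zero_iff.mpr hu0
      rcases h2 with h | h
      · have : ⟪gstar j, u⟫ = ‖gstar j‖ * ‖u‖ := by rw [hnorm j, one_mul]; exact h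
        have h3 := inner_eq_norm_mul_iff_real.mp this
        rw [hnorm j, one_smul] at h3
        exact ⟨‖u‖, hun, h3.symm⟩
      · have : ⟪gstar j, -u⟫ = ‖gstar j‖ * ‖-u‖ := by
          rw [inner_neg_right, hnorm j, one_mul, norm_neg, h, neg_neg]
        have h3 := inner_eq_norm_mul_iff_real.mp this
        rw [hnorm j, one_smul, norm_neg] at h3
        refine ⟨-‖u‖, neg_ne_zero.mpr hun, ?_⟩
        rw [neg_smul, h3, neg_neg]
    -- two distinct indices
    obtain ⟨c0, hc0, h0⟩ := hpar ⟨0, by omega⟩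
    obtain ⟨c1, hc1, h1⟩ := hpar ⟨1, by omega⟩
    have hij : (⟨0, by omega⟩ : Fin m) ≠ ⟨1, by omega⟩ := by
      simp [Fin.ext_iff]
    have : gstar ⟨1, by omega⟩ = (c1⁻¹ * c0) • gstar ⟨0, by omega⟩ := by
      rw [mul_smul, ← h0, h1, inv_smul_smul₀ hc1]
    exact hnp _ _ hij _ this
  have hbij : Function.Bijective L :=
    ⟨hinj, (LinearMap.injective_iff_surjective).mp hinj⟩
  have hkey : ∀ j, bproj (gstar j) (p j - pstar) = 0 := by
    intro j
    have : p j - pstar = ‖p j - pstar‖ • gstar j := by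
      rw [hgs j, smul_inv_smul₀ (hnn j)]
    rw [this]
    exact bproj_smul_self _ (hg0 j) _
  refine ⟨hbij, ?_, ?_⟩
  · apply Finset.sum_congr rfl
    intro j _
    have h := hkey j
    rw [bproj_sub] at h
    exact (sub_eq_zero.mp h).symm
  · rw [neg_eq_zero]
    apply Finset.sum_eq_zero
    intro j _
    have h := bproj_smul_self (gstar j) (hg0 j) 1
    rw [one_smul] at h
    rw [← hgs j]
    exact h
end

section
/- Let d ≥ 2 and m ≥ 2. Suppose p_1, …, p_m, p* ∈ ℝ^d satisfy p* ≠ p_j and g*_j = (p_j − p*)/‖p_j − p*‖ for all j, with the bearings g*_1, …, g*_m pairwise non-parallel. If x ∈ ℝ^d satisfies x ≠ p_j for all j and Σ_{j=1}^{m} P_{(p_j − x)/‖p_j − x‖} g*_j = 0, then x = p*. That is, p* is the unique equilibrium of the follower dynamics in the 1-to-many system. -/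
/- Pair the equilibrium equation with `p* - x`. Writing `p_j - x = r_j g_j` and
`p_j - p* = ρ_j g*_j`, the `j`-th term contributes `-ρ_j ‖P_{g_j} g*_j‖²`, because
`P_{g_j} g*_j` is orthogonal to `g_j`. As all `ρ_j > 0`, every `P_{g_j} g*_j` vanishes, so
`g_j ∥ g*_j` and `x` lies on the line through `p_j` and `p*` for every `j`. Two such lines
with non-parallel directions meet only in `p*`. -/

open RealInnerProductSpace

section Bproj

variable {d : ℕ}

lemma inner_bproj_left_self (g v : EuclideanSpace ℝ (Fin d)) : ⟪bproj g v, g⟫ = 0 := by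
  rcases eq_or_ne g 0 with rfl | hg
  · exact inner_zero_right _
  have hg2 : ‖g‖ ^ 2 ≠ 0 := by positivity
  simp only [bproj, inner_sub_left, real_inner_smul_left, real_inner_self_eq_norm_sq,
    real_inner_comm g v]
  field_simp
  ring

lemma inner_bproj_smul_sub_smul (g v : EuclideanSpace ℝ (Fin d)) (s t : ℝ) :
    ⟪bproj g v, s • g - t • v⟫ = -(t * ‖bproj g v‖ ^ 2) := by
  have hv : v = bproj g v + (⟪g, v⟫ / ‖g‖ ^ 2) • g := by simp [bproj]
  have hself : ⟪bproj g v, v⟫ = ‖bproj g v‖ ^ 2 := by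
    calc ⟪bproj g v, v⟫ = ⟪bproj g v, bproj g v + (⟪g, v⟫ / ‖g‖ ^ 2) • g⟫ := by rw [← hv]
      _ = ‖bproj g v‖ ^ 2 := by
        rw [inner_add_right, real_inner_smul_right, inner_bproj_left_self,
          real_inner_self_eq_norm_sq, mul_zero, add_zero]
  rw [inner_sub_right, real_inner_smul_right, real_inner_smul_right, inner_bproj_left_self,
    hself]
  ring

lemma exists_eq_smul_of_bproj_eq_zero {g v : EuclideanSpace ℝ (Fin d)} (hv : v ≠ 0)
    (h : bproj g v = 0) : ∃ c : ℝ, g = c • v := by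
  have hvg : v = (⟪g, v⟫ / ‖g‖ ^ 2) • g := sub_eq_zero.mp h
  have hk : ⟪g, v⟫ / ‖g‖ ^ 2 ≠ 0 := fun hk => hv (by rw [hvg, hk, zero_smul])
  exact ⟨_, ((inv_smul_eq_iff₀ hk).mpr hvg).symm⟩

end Bproj

lemma eq_zero_of_sum_eq_zero_of_inner_eq_neg_mul_norm_sq {E ι : Type*}
    [NormedAddCommGroup E] [InnerProductSpace ℝ E] [Fintype ι] {u : ι → E} {w : E}
    {t : ι → ℝ} (hsum : ∑ j, u j = 0) (ht : ∀ j, 0 < t j)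
    (hinner : ∀ j, ⟪u j, w⟫ = -(t j * ‖u j‖ ^ 2)) (j : ι) : u j = 0 := by
  have hzero : ∑ j, t j * ‖u j‖ ^ 2 = 0 := by
    have h := congrArg (⟪·, w⟫) hsum
    simp only [sum_inner, hinner, inner_zero_left, Finset.sum_neg_distrib, neg_eq_zero] at h
    exact h
  have hj := (Finset.sum_eq_zero_iff_of_nonneg fun i _ => by have := ht i; positivity).mp
    hzero j (Finset.mem_univ j)
  simpa [(ht j).ne'] using hj

lemma eq_zero_of_eq_smul_of_not_parallel {K V : Type*} [Field K] [AddCommGroup V] [Module K V]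
    {u v w : V} {s t : K} (hu : w = s • u) (hv : w = t • v) (hnp : ∀ c : K, v ≠ c • u) :
    w = 0 := by
  rcases eq_or_ne t 0 with rfl | ht
  · rw [hv, zero_smul]
  · refine absurd ?_ (hnp (t⁻¹ * s))
    rw [mul_smul, ← hu, hv, smul_smul, inv_mul_cancel₀ ht, one_smul]

theorem stmt7_general (d m : ℕ) (hm : 2 ≤ m)
    (p : Fin m → EuclideanSpace ℝ (Fin d)) (pstar : EuclideanSpace ℝ (Fin d))
    (hne : ∀ j, pstar ≠ p j)
    (gstar : Fin m → EuclideanSpace ℝ (Fin d))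
    (hgs : ∀ j, gstar j = (‖p j - pstar‖)⁻¹ • (p j - pstar))
    (hnp : ∀ i j : Fin m, i ≠ j → ∀ c : ℝ, gstar j ≠ c • gstar i)
    (x : EuclideanSpace ℝ (Fin d)) (hx : ∀ j, x ≠ p j)
    (heq : ∑ j, bproj ((‖p j - x‖)⁻¹ • (p j - x)) (gstar j) = 0) :
    x = pstar := by
  set g : Fin m → EuclideanSpace ℝ (Fin d) := fun j => (‖p j - x‖)⁻¹ • (p j - x)
  have hpstar : ∀ j, p j - pstar ≠ 0 := fun j => sub_ne_zero.mpr (hne j).symm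
  have hdisp : ∀ j, pstar - x = ‖p j - x‖ • g j - ‖p j - pstar‖ • gstar j := fun j => by
    have hx' : p j - x ≠ 0 := sub_ne_zero.mpr (hx j).symm
    simp only [g, hgs, smul_inv_smul₀ (norm_ne_zero_iff.mpr hx'),
      smul_inv_smul₀ (norm_ne_zero_iff.mpr (hpstar j))]
    abel
  have hzero : ∀ j, bproj (g j) (gstar j) = 0 :=
    eq_zero_of_sum_eq_zero_of_inner_eq_neg_mul_norm_sq (w := pstar - x) heq
      (fun j => norm_pos_iff.mpr (hpstar j))
      (fun j => by rw [hdisp j]; exact inner_bproj_smul_sub_smul _ _ _ _)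
  have hline : ∀ j, ∃ s : ℝ, x - pstar = s • gstar j := fun j => by
    have hgstar : gstar j ≠ 0 := by
      rw [hgs]; exact smul_ne_zero (inv_ne_zero (norm_ne_zero_iff.mpr (hpstar j))) (hpstar j)
    obtain ⟨c, hc⟩ := exists_eq_smul_of_bproj_eq_zero hgstar (hzero j)
    exact ⟨‖p j - pstar‖ - ‖p j - x‖ * c, by rw [← neg_sub, hdisp j, hc]; module⟩
  obtain ⟨s₀, hs₀⟩ := hline ⟨0, by omega⟩
  obtain ⟨s₁, hs₁⟩ := hline ⟨1, by omega⟩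
  exact sub_eq_zero.mp <| eq_zero_of_eq_smul_of_not_parallel hs₀ hs₁ <|
    hnp _ _ (by simp [Fin.ext_iff])

/-- Uniqueness of the equilibrium of the follower dynamics in the 1-to-many
system: if the target bearings `g*_j = (p_j − p*)/‖p_j − p*‖` are pairwise
non-parallel and `x` (distinct from all leaders) satisfies
`Σ_j P_{(p_j − x)/‖p_j − x‖} g*_j = 0`, then `x = p*`. -/
theorem stmt7 (d m : ℕ) (hd : 2 ≤ d) (hm : 2 ≤ m)
    (p : Fin m → EuclideanSpace ℝ (Fin d)) (pstar : EuclideanSpace ℝ (Fin d))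
    (hne : ∀ j, pstar ≠ p j)
    (gstar : Fin m → EuclideanSpace ℝ (Fin d))
    (hgs : ∀ j, gstar j = (‖p j - pstar‖)⁻¹ • (p j - pstar))
    (hnp : ∀ i j : Fin m, i ≠ j → ∀ c : ℝ, gstar j ≠ c • gstar i)
    (x : EuclideanSpace ℝ (Fin d)) (hx : ∀ j, x ≠ p j)
    (heq : ∑ j, bproj ((‖p j - x‖)⁻¹ • (p j - x)) (gstar j) = 0) :
    x = pstar :=
  stmt7_general d m hm p pstar hne gstar hgs hnp x hx heq
end

section
/- Let d ≥ 2 and m ≥ 2. Suppose p_1, …, p_m, p* ∈ ℝ^d satisfy p* ≠ p_j and g*_j = (p_j − p*)/‖p_j − p*‖ for all j, with the bearings g*_1, …, g*_m pairwise non-parallel. Let φ : [0, ∞) → ℝ^d be any solution of the follower dynamics, i.e., φ is differentiable, φ(t) ≠ p_j for all t ≥ 0 and all j, and φ′(t) = −Σ_{j=1}^{m} P_{(p_j − φ(t))/‖p_j − φ(t)‖} g*_j for all t ≥ 0. Then ‖φ(t) − p*‖ is nonincreasing, φ(t) → p* as t → ∞, and there exists λ > 0 such that ‖φ(t) − p*‖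 ≤ e^{−λ t} ‖φ(0) − p*‖ for all t ≥ 0; i.e., p* is a globally exponentially stable equilibrium. -/
open RealInnerProductSpace

/-!
Write `e = φ - p*` and `a_j = p_j - p*`, so that `p_j - φ = a_j - e`. The `j`-th term of the
field satisfies `⟪e, P_{g_j} g*_j⟫ = (‖e‖²‖a_j‖² - ⟪e, a_j⟫²) / (‖a_j‖ ‖a_j - e‖²) ≥ 0`, hence
`‖e‖²` is nonincreasing. Once `‖e‖ ≤ R := ‖e(0)‖`, each denominator is at most
`‖a_j‖ (‖a_j‖ + R)²`, so `-⟪e, ė⟫` dominates a fixed quadratic form in `e`. That form is positive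
definite because a nonzero `e` cannot be parallel to two non-parallel `a_j`, so by compactness of
the unit sphere it is at least `λ ‖e‖²`, and `‖e‖` decays like `exp (-λ t)`.
-/

open Filter Topology Real

lemma exists_pos_mul_norm_sq_le {E : Type*} [NormedAddCommGroup E] [NormedSpace ℝ E]
    [ProperSpace E] {Q : E → ℝ} (hQ : Continuous Q)
    (hhom : ∀ (r : ℝ) (x : E), Q (r • x) = r ^ 2 * Q x) (hpos : ∀ x, x ≠ 0 → 0 < Q x) :
    ∃ lam : ℝ, 0 < lam ∧ ∀ x, lam * ‖x‖ ^ 2 ≤ Q x := by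
  have hQ0 : Q 0 = 0 := by simpa using hhom 0 0
  rcases subsingleton_or_nontrivial E with hE | hE
  · exact ⟨1, one_pos, fun x => by simp [Subsingleton.elim x 0, hQ0]⟩
  obtain ⟨u, hu, hmin⟩ := (isCompact_sphere (0 : E) 1).exists_isMinOn
    (NormedSpace.sphere_nonempty.2 zero_le_one) hQ.continuousOn
  refine ⟨Q u, hpos u (ne_zero_of_mem_unit_sphere ⟨u, hu⟩), fun x => ?_⟩
  rcases eq_or_ne x 0 with rfl | hx
  · simp [hQ0]
  have hx' : ‖x‖ ≠ 0 := norm_ne_zero_iff.2 hx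
  have hunit : ‖x‖⁻¹ • x ∈ Metric.sphere (0 : E) 1 := by
    simp [norm_smul, hx']
  calc Q u * ‖x‖ ^ 2 ≤ Q (‖x‖⁻¹ • x) * ‖x‖ ^ 2 := by gcongr; exact hmin hunit
    _ = Q x := by rw [hhom]; field_simp

lemma tendsto_of_norm_sub_le_exp_mul {F : Type*} [NormedAddCommGroup F] {φ : ℝ → F} {x : F}
    {lam C : ℝ} (hlam : 0 < lam) (h : ∀ t, 0 ≤ t → ‖φ t - x‖ ≤ exp (-lam * t) * C) :
    Tendsto φ atTop (𝓝 x) := by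
  rw [tendsto_iff_norm_sub_tendsto_zero]
  have hexp : Tendsto (fun t => exp (-lam * t) * C) atTop (𝓝 0) := by
    simpa using ((tendsto_exp_atBot.comp
      (tendsto_id.const_mul_atTop_of_neg (neg_neg_of_pos hlam))).mul_const C)
  exact squeeze_zero' (Eventually.of_forall fun t => norm_nonneg _)
    (eventually_ge_atTop 0 |>.mono h) hexp

section InnerProduct

variable {F : Type*} [NormedAddCommGroup F] [InnerProductSpace ℝ F]

def gramDet (x y : F) : ℝ := ‖x‖ ^ 2 * ‖y‖ ^ 2 - ⟪x, y⟫ ^ 2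

lemma gramDet_nonneg (x y : F) : 0 ≤ gramDet x y := by
  rw [gramDet, sub_nonneg, ← mul_pow, ← sq_abs]
  exact pow_le_pow_left₀ (abs_nonneg _) (abs_real_inner_le_norm x y) 2

lemma gramDet_smul_left (r : ℝ) (x y : F) : gramDet (r • x) y = r ^ 2 * gramDet x y := by
  simp only [gramDet, norm_smul, real_inner_smul_left, Real.norm_eq_abs, mul_pow, sq_abs]
  ring

lemma continuous_gramDet_left (y : F) : Continuous fun x => gramDet x y := by
  unfold gramDet
  fun_prop

lemma mem_span_singleton_of_gramDet_eq_zero {x y : F} (hx : x ≠ 0) (h : gramDet x y = 0) :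
    y ∈ Submodule.span ℝ {x} := by
  rcases eq_or_ne y 0 with rfl | hy
  · exact Submodule.zero_mem _
  obtain ⟨r, -, rfl⟩ := (norm_inner_eq_norm_iff (𝕜 := ℝ) hx hy).1 <| by
    rw [Real.norm_eq_abs, ← sq_eq_sq₀ (abs_nonneg _) (by positivity), sq_abs, mul_pow]
    unfold gramDet at h
    linarith
  exact Submodule.smul_mem _ r (Submodule.mem_span_singleton_self x)

lemma notMem_span_singleton_of_forall_ne_smul {x y : F} (hx : x ≠ 0)
    (h : ∀ c : ℝ, ‖y‖⁻¹ • y ≠ c • (‖x‖⁻¹ • x)) : y ∉ Submodule.span ℝ {x} := fun hy => by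
  rw [← Submodule.span_singleton_smul_eq (IsUnit.mk0 _ (inv_ne_zero (norm_ne_zero_iff.2 hx)))]
    at hy
  obtain ⟨c, hc⟩ := Submodule.mem_span_singleton.1 (Submodule.smul_mem _ ‖y‖⁻¹ hy)
  exact h c hc.symm

variable {ι : Type*} [Fintype ι]

lemma sum_gramDet_div_pos {a : ι → F} {w : ι → ℝ} (hw : ∀ k, 0 < w k) {i j : ι}
    (hai : a i ≠ 0) (hij : a j ∉ Submodule.span ℝ {a i}) {x : F} (hx : x ≠ 0) :
    0 < ∑ k, gramDet x (a k) / w k := by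
  have hterm : ∀ k, 0 ≤ gramDet x (a k) / w k :=
    fun k => div_nonneg (gramDet_nonneg _ _) (hw k).le
  suffices h : 0 < gramDet x (a i) ∨ 0 < gramDet x (a j) by
    rcases h with h | h <;>
      exact (div_pos h (hw _)).trans_le
        (Finset.single_le_sum (fun k _ => hterm k) (Finset.mem_univ _))
  by_contra! h
  have hi := mem_span_singleton_of_gramDet_eq_zero hx (h.1.antisymm (gramDet_nonneg _ _))
  have hj := mem_span_singleton_of_gramDet_eq_zero hx (h.2.antisymm (gramDet_nonneg _ _))
  obtain ⟨r, hr⟩ := Submodule.mem_span_singleton.1 hi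
  rw [← hr] at hai hij
  rw [Submodule.span_singleton_smul_eq (IsUnit.mk0 r (left_ne_zero_of_smul hai))] at hij
  exact hij hj

lemma exists_pos_mul_norm_sq_le_sum_gramDet_div [ProperSpace F] {a : ι → F} {w : ι → ℝ}
    (hw : ∀ k, 0 < w k) {i j : ι} (hai : a i ≠ 0) (hij : a j ∉ Submodule.span ℝ {a i}) :
    ∃ lam : ℝ, 0 < lam ∧ ∀ x, lam * ‖x‖ ^ 2 ≤ ∑ k, gramDet x (a k) / w k := by
  refine exists_pos_mul_norm_sq_le ?_ (fun r x => ?_)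
    (fun x hx => sum_gramDet_div_pos hw hai hij hx)
  · exact continuous_finsetSum _ fun k _ => (continuous_gramDet_left _).div_const _
  · simp only [gramDet_smul_left, Finset.mul_sum, mul_div_assoc]

lemma norm_le_exp_mul_norm_of_inner_deriv_le {ψ ψ' : ℝ → F} {μ : ℝ}
    (hψ : ∀ t, 0 ≤ t → HasDerivAt ψ (ψ' t) t)
    (hdecay : ∀ t, 0 ≤ t → ⟪ψ t, ψ' t⟫ ≤ -μ * ‖ψ t‖ ^ 2) {s t : ℝ} (hs : 0 ≤ s) (hst : s ≤ t) :
    ‖ψ t‖ ≤ exp (-μ * (t - s)) * ‖ψ s‖ := by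
  have hW : ∀ t, 0 ≤ t → HasDerivAt (fun t => exp (2 * μ * t) * ‖ψ t‖ ^ 2)
      (exp (2 * μ * t) * (2 * μ) * ‖ψ t‖ ^ 2 + exp (2 * μ * t) * (2 * ⟪ψ t, ψ' t⟫)) t :=
    fun t ht => (((hasDerivAt_id t).const_mul (2 * μ)).exp.congr_deriv (by simp)).mul
      (hψ t ht).norm_sq
  have hanti : AntitoneOn (fun t => exp (2 * μ * t) * ‖ψ t‖ ^ 2) (Set.Ici 0) := by
    refine antitoneOn_of_hasDerivWithinAt_nonpos (convex_Ici 0)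
      (fun t ht => (hW t ht).continuousAt.continuousWithinAt)
      (fun t ht => (hW t (interior_subset ht)).hasDerivWithinAt) (fun t ht => ?_)
    have := hdecay t (interior_subset ht)
    have := exp_pos (2 * μ * t)
    nlinarith
  have hsq : ‖ψ t‖ ^ 2 ≤ (exp (-μ * (t - s)) * ‖ψ s‖) ^ 2 := by
    have h := hanti hs (hs.trans hst : (0 : ℝ) ≤ t) hst
    rw [mul_pow, ← exp_nat_mul]
    calc ‖ψ t‖ ^ 2 = exp (-(2 * μ * t)) * (exp (2 * μ * t) * ‖ψ t‖ ^ 2) := by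
          rw [← mul_assoc, ← exp_add]; simp
      _ ≤ exp (-(2 * μ * t)) * (exp (2 * μ * s) * ‖ψ s‖ ^ 2) := by gcongr
      _ = _ := by rw [← mul_assoc, ← exp_add]; ring_nf
  exact (sq_le_sq₀ (norm_nonneg _) (by positivity)).1 hsq

end InnerProduct

section Follower

variable {d m : ℕ}

lemma inner_bproj_normalize {x a : EuclideanSpace ℝ (Fin d)} (hxa : a - x ≠ 0) :
    ⟪x, bproj (‖a - x‖⁻¹ • (a - x)) (‖a‖⁻¹ • a)⟫ = gramDet x a / (‖a‖ * ‖a - x‖ ^ 2) := by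
  have hxa' : ‖a - x‖ ≠ 0 := norm_ne_zero_iff.2 hxa
  have hsq : ‖a - x‖ ^ 2 = ‖a‖ ^ 2 - 2 * ⟪x, a⟫ + ‖x‖ ^ 2 := by
    rw [norm_sub_sq_real, real_inner_comm]
  rcases eq_or_ne a 0 with rfl | ha
  · simp [bproj, gramDet]
  have ha' : ‖a‖ ≠ 0 := norm_ne_zero_iff.2 ha
  simp only [bproj, gramDet, norm_smul, norm_inv, norm_norm, inv_mul_cancel₀ hxa', inner_sub_left,
    inner_sub_right, real_inner_smul_left, real_inner_smul_right, real_inner_self_eq_norm_sq,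
    one_pow, div_one]
  field_simp
  linear_combination ⟪x, a⟫ * hsq

noncomputable def followerField (p gstar : Fin m → EuclideanSpace ℝ (Fin d))
    (x : EuclideanSpace ℝ (Fin d)) : EuclideanSpace ℝ (Fin d) :=
  -∑ j, bproj (‖p j - x‖⁻¹ • (p j - x)) (gstar j)

lemma inner_followerField_le (p : Fin m → EuclideanSpace ℝ (Fin d))
    {pstar x : EuclideanSpace ℝ (Fin d)} (hp : ∀ j, pstar ≠ p j) (hx : ∀ j, x ≠ p j) {R : ℝ}
    (hR : ‖x - pstar‖ ≤ R) :
    ⟪x - pstar, followerField p (fun j => ‖p j - pstar‖⁻¹ • (p j - pstar)) x⟫ ≤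
      -∑ j, gramDet (x - pstar) (p j - pstar) / (‖p j - pstar‖ * (‖p j - pstar‖ + R) ^ 2) := by
  rw [followerField, inner_neg_right, inner_sum, neg_le_neg_iff]
  refine Finset.sum_le_sum fun j _ => ?_
  have hdiff : p j - x = (p j - pstar) - (x - pstar) := (sub_sub_sub_cancel_right _ _ _).symm
  have hpx : 0 < ‖p j - x‖ := norm_pos_iff.2 (sub_ne_zero.2 (hx j).symm)
  have hpp : 0 < ‖p j - pstar‖ := norm_pos_iff.2 (sub_ne_zero.2 (hp j).symm)
  have hdist : ‖p j - x‖ ≤ ‖p j - pstar‖ + R :=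
    hdiff ▸ (norm_sub_le _ _).trans (by gcongr)
  rw [hdiff, inner_bproj_normalize (hdiff ▸ norm_pos_iff.1 hpx), ← hdiff]
  gcongr
  exact gramDet_nonneg _ _

end Follower

theorem stmt8_general (d m : ℕ) (hm : 2 ≤ m)
    (p : Fin m → EuclideanSpace ℝ (Fin d)) (pstar : EuclideanSpace ℝ (Fin d))
    (hne : ∀ j, pstar ≠ p j)
    (gstar : Fin m → EuclideanSpace ℝ (Fin d))
    (hgs : ∀ j, gstar j = (‖p j - pstar‖)⁻¹ • (p j - pstar))
    (hnp : ∀ i j : Fin m, i ≠ j → ∀ c : ℝ, gstar j ≠ c • gstar i)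
    (φ : ℝ → EuclideanSpace ℝ (Fin d))
    (hφne : ∀ t : ℝ, 0 ≤ t → ∀ j, φ t ≠ p j)
    (hφ : ∀ t : ℝ, 0 ≤ t → HasDerivAt φ
      (-(∑ j, bproj ((‖p j - φ t‖)⁻¹ • (p j - φ t)) (gstar j))) t) :
    AntitoneOn (fun t => ‖φ t - pstar‖) (Set.Ici (0 : ℝ)) ∧
    Filter.Tendsto φ Filter.atTop (nhds pstar) ∧
    ∃ lam : ℝ, 0 < lam ∧
      ∀ t : ℝ, 0 ≤ t → ‖φ t - pstar‖ ≤ Real.exp (-lam * t) * ‖φ 0 - pstar‖ := by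
  obtain rfl : gstar = fun j => ‖p j - pstar‖⁻¹ • (p j - pstar) := funext hgs
  have ha : ∀ j, p j - pstar ≠ 0 := fun j => sub_ne_zero.2 (hne j).symm
  have hψ : ∀ t, 0 ≤ t → HasDerivAt (φ · - pstar) (followerField p _ (φ t)) t :=
    fun t ht => (hφ t ht).sub_const pstar
  have hdecay (t : ℝ) (ht : 0 ≤ t) (R : ℝ) (hR : ‖φ t - pstar‖ ≤ R) :
      ⟪φ t - pstar, followerField p _ (φ t)⟫ ≤ -∑ j, gramDet (φ t - pstar) (p j - pstar) /
        (‖p j - pstar‖ * (‖p j - pstar‖ + R) ^ 2) :=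
    inner_followerField_le p hne (hφne t ht) hR
  have hmono {s t : ℝ} (hs : 0 ≤ s) (hst : s ≤ t) : ‖φ t - pstar‖ ≤ ‖φ s - pstar‖ := by
    simpa using norm_le_exp_mul_norm_of_inner_deriv_le (μ := 0) hψ (fun t ht =>
      (hdecay t ht _ le_rfl).trans (by
        simpa using Finset.sum_nonneg fun j _ => div_nonneg (gramDet_nonneg _ _) (by positivity)))
      hs hst
  obtain ⟨i, j, hij⟩ := (Fin.nontrivial_iff_two_le.2 hm).exists_pair_ne
  obtain ⟨lam, hlam, hQ⟩ := exists_pos_mul_norm_sq_le_sum_gramDet_div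
    (a := fun k => p k - pstar)
    (w := fun k => ‖p k - pstar‖ * (‖p k - pstar‖ + ‖φ 0 - pstar‖) ^ 2)
    (fun k => by have := norm_pos_iff.2 (ha k); positivity) (ha i)
    (notMem_span_singleton_of_forall_ne_smul (ha i) (hnp i j hij))
  have hexp (t : ℝ) (ht : 0 ≤ t) : ‖φ t - pstar‖ ≤ exp (-lam * t) * ‖φ 0 - pstar‖ := by
    simpa using norm_le_exp_mul_norm_of_inner_deriv_le hψ
      (fun t ht => (hdecay t ht _ (hmono le_rfl ht)).trans (neg_mul lam _ ▸ neg_le_neg (hQ _)))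
      le_rfl ht
  exact ⟨fun s hs t _ hst => hmono hs hst, tendsto_of_norm_sub_le_exp_mul hlam hexp, lam, hlam,
    hexp⟩

/-- Global exponential stability of the target follower position `p*` in the
1-to-many system: along any solution `φ` of
`φ' = −Σ_j P_{(p_j − φ)/‖p_j − φ‖} g*_j` avoiding the leaders, the distance
`‖φ(t) − p*‖` is nonincreasing, `φ(t) → p*`, and the convergence is
exponential. -/
theorem stmt8 (d m : ℕ) (hd : 2 ≤ d) (hm : 2 ≤ m)
    (p : Fin m → EuclideanSpace ℝ (Fin d)) (pstar : EuclideanSpace ℝ (Fin d))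
    (hne : ∀ j, pstar ≠ p j)
    (gstar : Fin m → EuclideanSpace ℝ (Fin d))
    (hgs : ∀ j, gstar j = (‖p j - pstar‖)⁻¹ • (p j - pstar))
    (hnp : ∀ i j : Fin m, i ≠ j → ∀ c : ℝ, gstar j ≠ c • gstar i)
    (φ : ℝ → EuclideanSpace ℝ (Fin d))
    (hφne : ∀ t : ℝ, 0 ≤ t → ∀ j, φ t ≠ p j)
    (hφ : ∀ t : ℝ, 0 ≤ t → HasDerivAt φ
      (-(∑ j, bproj ((‖p j - φ t‖)⁻¹ • (p j - φ t)) (gstar j))) t) :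
    AntitoneOn (fun t => ‖φ t - pstar‖) (Set.Ici (0 : ℝ)) ∧
    Filter.Tendsto φ Filter.atTop (nhds pstar) ∧
    ∃ lam : ℝ, 0 < lam ∧
      ∀ t : ℝ, 0 ≤ t → ‖φ t - pstar‖ ≤ Real.exp (-lam * t) * ‖φ 0 - pstar‖ :=
  stmt8_general d m hm p pstar hne gstar hgs hnp φ hφne hφ
end

section
/- Let d ≥ 2 and m ≥ 2. Let g*_1, …, g*_m be pairwise non-parallel unit vectors in ℝ^d, and suppose the leaders are placed at positions p̄_1, …, p̄_m realizing the negated target bearings: there exists p̄* ∈ ℝ^d with p̄* ≠ p̄_j and (p̄_j − p̄*)/‖p̄_j − p̄*‖ = −g*_j for all j. Consider the follower dynamics ṗ_n = u(x) := −Σ_{j=1}^{m} P_{(p̄_j − x)/‖p̄_j − x‖} g*_j. Then: (i) p̄* = (Σ_j P_{g*_j})^{-1}(Σ_j P_{g*_j} p̄_j) and u(p̄*) = 0; (ii) p̄* is the only point x with x ≠ p̄_j for all j satisfying u(x) = 0; and (iii) for every x ≠ p̄* with x ≠ p̄_j for all j, ⟨x − p̄*, u(x)⟩ > 0, so the distance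 ‖x − p̄*‖ strictly increases along trajectories and the equilibrium p̄* is unstable. -/
/-!
`P_g` is the orthogonal projection onto `(ℝ ∙ g)ᗮ`, a symmetric idempotent whose kernel is
`ℝ ∙ g`. Put `y = x - p̄*` and `r_j = ‖p̄_j - p̄*‖ > 0`. The bearing from `x` to leader `j` is a
nonzero multiple of `v_j = y + r_j g*_j`, and `P_{v_j} v_j = 0` gives
`P_{v_j} y = -r_j P_{v_j} g*_j`, hence `⟪y, -P_{v_j} g*_j⟫ = r_j ‖P_{v_j} g*_j‖² ≥ 0`.
This term vanishes only when `y` is parallel to `g*_j`, which for `y ≠ 0` fails for some `j`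
because two of the `g*_j` are not parallel; so `⟪y, u(x)⟫ > 0`, and `u` has no zero besides
`p̄*`. Likewise `⟪v, Σ_j P_{g*_j} v⟫ = Σ_j ‖P_{g*_j} v‖² > 0` for `v ≠ 0`, so `Σ_j P_{g*_j}`
is injective, hence invertible.
-/

open RealInnerProductSpace

theorem exists_notMem_span_singleton {K V ι : Type*} [Field K] [AddCommGroup V] [Module K V]
    {g : ι → V} {i j : ι} (hnp : ∀ c : K, g j ≠ c • g i) {y : V} (hy : y ≠ 0) :
    ∃ k, y ∉ K ∙ g k := by
  by_contra! h
  obtain ⟨a, ha⟩ := Submodule.mem_span_singleton.mp (h i)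
  obtain ⟨b, hb⟩ := Submodule.mem_span_singleton.mp (h j)
  have hb0 : b ≠ 0 := by
    rintro rfl
    exact hy (by rw [← hb, zero_smul])
  refine hnp (b⁻¹ * a) ?_
  rw [mul_smul, ha, ← hb, inv_smul_smul₀ hb0]

section

variable {d : ℕ}

theorem bproj_eq_starProjection (g v : EuclideanSpace ℝ (Fin d)) :
    bproj g v = (ℝ ∙ g)ᗮ.starProjection v := by
  rw [Submodule.starProjection_orthogonal_val, Submodule.starProjection_singleton]
  rfl

theorem bproj_eq_zero_iff {g v : EuclideanSpace ℝ (Fin d)} : bproj g v = 0 ↔ v ∈ ℝ ∙ g := by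
  rw [bproj_eq_starProjection, Submodule.starProjection_apply_eq_zero_iff,
    Submodule.orthogonal_orthogonal]

theorem bproj_eq_bproj_iff {g v w : EuclideanSpace ℝ (Fin d)} :
    bproj g v = bproj g w ↔ v - w ∈ ℝ ∙ g := by
  rw [← bproj_eq_zero_iff, bproj_eq_starProjection, bproj_eq_starProjection,
    bproj_eq_starProjection, map_sub, sub_eq_zero]

theorem inner_bproj_right (g v w : EuclideanSpace ℝ (Fin d)) :
    ⟪v, bproj g w⟫ = ⟪bproj g v, bproj g w⟫ := by
  simp only [bproj_eq_starProjection]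
  set K := (ℝ ∙ g)ᗮ
  rw [K.inner_starProjection_left_eq_right,
    K.starProjection_eq_self_iff.mpr (K.starProjection_apply_mem w)]

theorem bproj_smul_left {c : ℝ} (hc : c ≠ 0) (g : EuclideanSpace ℝ (Fin d)) :
    bproj (c • g) = bproj g := by
  ext1 v
  simp only [bproj_eq_starProjection, Submodule.span_singleton_smul_eq hc.isUnit]

theorem bproj_neg (g : EuclideanSpace ℝ (Fin d)) : bproj (-g) = bproj g := by
  rw [← neg_one_smul ℝ g, bproj_smul_left (by norm_num)]

theorem bproj_inv_norm_smul_sub {p q x g : EuclideanSpace ℝ (Fin d)} {r : ℝ} (hx : x ≠ p)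
    (hp : p - q = -(r • g)) : bproj (‖p - x‖⁻¹ • (p - x)) = bproj (x - q + r • g) := by
  have hsub : p - x = -(x - q + r • g) := by
    rw [← sub_add_sub_cancel p q x, hp]
    abel
  rw [bproj_smul_left (inv_ne_zero (norm_ne_zero_iff.mpr (sub_ne_zero.mpr hx.symm))), hsub,
    bproj_neg]

theorem inner_neg_bproj_add_smul (y g : EuclideanSpace ℝ (Fin d)) (r : ℝ) :
    ⟪y, -bproj (y + r • g) g⟫ = r * ‖bproj (y + r • g) g‖ ^ 2 := by
  set v := y + r • g
  have hy : bproj v y = -(r • bproj v g) := by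
    have hv : bproj v v = 0 := bproj_eq_zero_iff.mpr (Submodule.mem_span_singleton_self v)
    simp only [bproj_eq_starProjection, map_add, map_smul, v] at hv ⊢
    exact eq_neg_of_add_eq_zero_left hv
  rw [inner_neg_right, inner_bproj_right, hy, inner_neg_left, real_inner_smul_left,
    real_inner_self_eq_norm_sq, neg_neg]

theorem inner_bproj_self (g v : EuclideanSpace ℝ (Fin d)) : ⟪v, bproj g v⟫ = ‖bproj g v‖ ^ 2 := by
  rw [inner_bproj_right, real_inner_self_eq_norm_sq]

theorem mem_span_singleton_of_bproj_add_smul_eq_zero {g y : EuclideanSpace ℝ (Fin d)} {r : ℝ}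
    (hg : g ≠ 0) (h : bproj (y + r • g) g = 0) : y ∈ ℝ ∙ g := by
  obtain ⟨a, ha⟩ := Submodule.mem_span_singleton.mp (bproj_eq_zero_iff.mp h)
  have ha0 : a ≠ 0 := by
    rintro rfl
    exact hg (by rw [← ha, zero_smul])
  have hv : y + r • g = a⁻¹ • g := (eq_inv_smul_iff₀ ha0).mpr ha
  refine Submodule.mem_span_singleton.mpr ⟨a⁻¹ - r, ?_⟩
  rw [sub_smul, ← hv, add_sub_cancel_right]

theorem bijective_sum_bproj {ι : Type*} [Fintype ι] {g : ι → EuclideanSpace ℝ (Fin d)}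
    (hg : ∀ y ≠ 0, ∃ k, y ∉ ℝ ∙ g k) :
    Function.Bijective (fun v : EuclideanSpace ℝ (Fin d) => ∑ k, bproj (g k) v) := by
  let T : EuclideanSpace ℝ (Fin d) →ₗ[ℝ] EuclideanSpace ℝ (Fin d) :=
    ∑ k, ((ℝ ∙ g k)ᗮ.starProjection : _ →ₗ[ℝ] _)
  have hT : ⇑T = fun v => ∑ k, bproj (g k) v := by
    ext1 v
    simp [T, bproj_eq_starProjection]
  have hinj : Function.Injective T := by
    refine (injective_iff_map_eq_zero T).mpr fun v hv => ?_
    by_contra hv0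
    obtain ⟨k, hk⟩ := hg v hv0
    have hpos : 0 < ⟪v, T v⟫ := by
      rw [hT, inner_sum]
      simp_rw [inner_bproj_self]
      exact Finset.sum_pos' (fun _ _ => by positivity) ⟨k, Finset.mem_univ _,
        pow_pos (norm_pos_iff.mpr fun h => hk (bproj_eq_zero_iff.mp h)) 2⟩
    rw [hv, inner_zero_right] at hpos
    exact hpos.false
  rw [← hT]
  exact ⟨hinj, LinearMap.injective_iff_surjective.mp hinj⟩

theorem inner_neg_sum_bproj_add_smul_pos {ι : Type*} [Fintype ι]
    {g : ι → EuclideanSpace ℝ (Fin d)} {r : ι → ℝ} {y : EuclideanSpace ℝ (Fin d)}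
    (hg : ∀ k, g k ≠ 0) (hr : ∀ k, 0 < r k) (hy : ∃ k, y ∉ ℝ ∙ g k) :
    0 < ⟪y, -∑ k, bproj (y + r k • g k) (g k)⟫ := by
  obtain ⟨k, hk⟩ := hy
  rw [← Finset.sum_neg_distrib, inner_sum]
  simp_rw [inner_neg_bproj_add_smul]
  refine Finset.sum_pos' (fun l _ => mul_nonneg (hr l).le (by positivity))
    ⟨k, Finset.mem_univ _, mul_pos (hr k) (pow_pos (norm_pos_iff.mpr fun h => ?_) 2)⟩
  exact hk (mem_span_singleton_of_bproj_add_smul_eq_zero (hg k) h)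

end

theorem stmt10_general (d m : ℕ) (hm : 2 ≤ m)
    (gstar : Fin m → EuclideanSpace ℝ (Fin d))
    (hunit : ∀ j, ‖gstar j‖ = 1)
    (hnp : ∀ i j : Fin m, i ≠ j → ∀ c : ℝ, gstar j ≠ c • gstar i)
    (pbar : Fin m → EuclideanSpace ℝ (Fin d))
    (pbarstar : EuclideanSpace ℝ (Fin d))
    (hne : ∀ j, pbarstar ≠ pbar j)
    (hbear : ∀ j, (‖pbar j - pbarstar‖)⁻¹ • (pbar j - pbarstar) = -gstar j) :
    (Function.Bijective
        (fun v : EuclideanSpace ℝ (Fin d) => ∑ j, bproj (gstar j) v) ∧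
      (∑ j, bproj (gstar j) pbarstar) = ∑ j, bproj (gstar j) (pbar j) ∧
      -(∑ j, bproj ((‖pbar j - pbarstar‖)⁻¹ • (pbar j - pbarstar)) (gstar j))
        = 0) ∧
    (∀ x : EuclideanSpace ℝ (Fin d), (∀ j, x ≠ pbar j) →
      -(∑ j, bproj ((‖pbar j - x‖)⁻¹ • (pbar j - x)) (gstar j)) = 0 →
      x = pbarstar) ∧
    (∀ x : EuclideanSpace ℝ (Fin d), (∀ j, x ≠ pbar j) → x ≠ pbarstar →
      0 < ⟪x - pbarstar,
        -(∑ j, bproj ((‖pbar j - x‖)⁻¹ • (pbar j - x)) (gstar j))⟫) := by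
  have hspan : ∀ y ≠ 0, ∃ k, y ∉ ℝ ∙ gstar k :=
    fun y => exists_notMem_span_singleton (hnp ⟨0, by omega⟩ ⟨1, by omega⟩ (by simp))
  have hg : ∀ k, gstar k ≠ 0 := fun k => norm_ne_zero_iff.mp (by simp [hunit k])
  set r := fun k => ‖pbar k - pbarstar‖
  have hr : ∀ k, 0 < r k := fun k => norm_pos_iff.mpr (sub_ne_zero.mpr (hne k).symm)
  have hpbar : ∀ k, pbar k - pbarstar = -(r k • gstar k) := fun k => by
    rw [← smul_neg, ← hbear k, smul_inv_smul₀ (hr k).ne']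
  have hunstable : ∀ x, (∀ k, x ≠ pbar k) → x ≠ pbarstar →
      0 < ⟪x - pbarstar, -(∑ k, bproj (‖pbar k - x‖⁻¹ • (pbar k - x)) (gstar k))⟫ := by
    intro x hx hxs
    simp only [bproj_inv_norm_smul_sub (hx _) (hpbar _)]
    exact inner_neg_sum_bproj_add_smul_pos hg hr (hspan _ (sub_ne_zero.mpr hxs))
  refine ⟨⟨bijective_sum_bproj hspan, ?_, ?_⟩, ?_, hunstable⟩
  · refine Finset.sum_congr rfl fun k _ => bproj_eq_bproj_iff.mpr ?_
    rw [← neg_sub, hpbar k, neg_neg]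
    exact Submodule.smul_mem _ _ (Submodule.mem_span_singleton_self _)
  · simp [hbear, bproj_neg, bproj_eq_zero_iff.mpr (Submodule.mem_span_singleton_self _)]
  · intro x hx hu
    by_contra hxs
    simpa [hu] using hunstable x hx hxs

/-- If the leaders `p̄_1, …, p̄_m` realize the *negated* target bearings
(`(p̄_j − p̄*)/‖p̄_j − p̄*‖ = −g*_j` for some `p̄*`), with `g*_1, …, g*_m`
pairwise non-parallel unit vectors, then for the follower control
`u(x) = −Σ_j P_{(p̄_j − x)/‖p̄_j − x‖} g*_j`:
(i) `p̄* = (Σ_j P_{g*_j})⁻¹ (Σ_j P_{g*_j} p̄_j)` and `u(p̄*) = 0`;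
(ii) `p̄*` is the only zero of `u` away from the leaders;
(iii) `⟪x − p̄*, u(x)⟫ > 0` for all `x ≠ p̄*`, so `p̄*` is unstable. -/
theorem stmt10 (d m : ℕ) (hd : 2 ≤ d) (hm : 2 ≤ m)
    (gstar : Fin m → EuclideanSpace ℝ (Fin d))
    (hunit : ∀ j, ‖gstar j‖ = 1)
    (hnp : ∀ i j : Fin m, i ≠ j → ∀ c : ℝ, gstar j ≠ c • gstar i)
    (pbar : Fin m → EuclideanSpace ℝ (Fin d))
    (pbarstar : EuclideanSpace ℝ (Fin d))
    (hne : ∀ j, pbarstar ≠ pbar j)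
    (hbear : ∀ j, (‖pbar j - pbarstar‖)⁻¹ • (pbar j - pbarstar) = -gstar j) :
    (Function.Bijective
        (fun v : EuclideanSpace ℝ (Fin d) => ∑ j, bproj (gstar j) v) ∧
      (∑ j, bproj (gstar j) pbarstar) = ∑ j, bproj (gstar j) (pbar j) ∧
      -(∑ j, bproj ((‖pbar j - pbarstar‖)⁻¹ • (pbar j - pbarstar)) (gstar j))
        = 0) ∧
    (∀ x : EuclideanSpace ℝ (Fin d), (∀ j, x ≠ pbar j) →
      -(∑ j, bproj ((‖pbar j - x‖)⁻¹ • (pbar j - x)) (gstar j)) = 0 →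
      x = pbarstar) ∧
    (∀ x : EuclideanSpace ℝ (Fin d), (∀ j, x ≠ pbar j) → x ≠ pbarstar →
      0 < ⟪x - pbarstar,
        -(∑ j, bproj ((‖pbar j - x‖)⁻¹ • (pbar j - x)) (gstar j))⟫) :=
  stmt10_general d m hm gstar hunit hnp pbar pbarstar hne hbear
end
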